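/- Division test for factors: let R be a finite nonempty relation over U and P a relation over a nonempty V ⊊ U. Then P is a factor of R if and only if π_V(R) = P and |P| · |π_{U\V}(R)| = |R|. -/

import Mathlib

open Classical

noncomputable def restrictT {α D : Type*} (V : Set α) (t : α → Option D) : α → Option D :=
  fun a => if a ∈ V then t a else none

def combineT {α D : Type*} (q r : α → Option D) : α → Option D :=
  fun a => (q a).orElse (fun _ => r a)

def prodRel {α D : Type*} (Q R : Set (α → Option D)) : Set (α → Option D) :=
  Set.image2 combineT Q R

def IsOver {α D : Type*} (U : Set α) (t : α → Option D) : Prop :=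
  ∀ a, (t a).isSome ↔ a ∈ U

def IsRelOver {α D : Type*} (U : Set α) (R : Set (α → Option D)) : Prop :=
  R.Finite ∧ ∀ t ∈ R, IsOver U t

noncomputable def projRel {α D : Type*} (V : Set α) (R : Set (α → Option D)) :
    Set (α → Option D) :=
  (restrictT V) '' R

def IsFactor {α D : Type*} (U : Set α) (R : Set (α → Option D))
    (V : Set α) (Q : Set (α → Option D)) : Prop :=
  V.Nonempty ∧ V ⊆ U ∧ IsRelOver V Q ∧
    ∃ R', IsRelOver (U \ V) R' ∧ R = prodRel Q R'

noncomputable def prodList {α D : Type*} (L : List (Set (α → Option D))) :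
    Set (α → Option D) :=
  L.foldr prodRel {fun _ => none}

def IsPrimeRel {α D : Type*} (U : Set α) (Q : Set (α → Option D)) : Prop :=
  IsRelOver U Q ∧ ∀ V P, IsFactor U Q V P → P = Q

def selEq {α D : Type*} (A : α) (v : D) (S : Set (α → Option D)) : Set (α → Option D) :=
  {t ∈ S | t A = some v}

def selNe {α D : Type*} (A : α) (v : D) (S : Set (α → Option D)) : Set (α → Option D) :=
  {t ∈ S | t A ≠ some v}

/-! A tuple of `R` over `U` is the combination of its restrictions to `V` and to `U \ V`, so `R`
always embeds into `π_V(R) × π_{U\V}(R)`, and the embedding is onto exactly when the cardinalities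
agree. Conversely, a product of relations over disjoint attribute sets has its factors as
projections and, since a combined tuple determines both its parts, has the product cardinality. -/

section Tuples

variable {α D : Type*}

lemma IsOver.eq_none {U : Set α} {t : α → Option D} (h : IsOver U t) {a : α} (ha : a ∉ U) :
    t a = none :=
  Option.not_isSome_iff_eq_none.mp fun hs => ha ((h a).mp hs)

lemma IsOver.restrictT {U W : Set α} {t : α → Option D} (h : IsOver U t) (hWU : W ⊆ U) :
    IsOver W (restrictT W t) := by
  intro a
  by_cases ha : a ∈ W
  · simp [_root_.restrictT, ha, (h a).mpr (hWU ha)]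
  · simp [_root_.restrictT, ha]

lemma restrictT_combineT_left {V : Set α} {q r : α → Option D} (hq : IsOver V q) :
    restrictT V (combineT q r) = q := by
  funext a
  by_cases ha : a ∈ V
  · obtain ⟨v, hv⟩ := Option.isSome_iff_exists.mp ((hq a).mpr ha)
    simp [restrictT, combineT, ha, hv]
  · simp [restrictT, ha, hq.eq_none ha]

lemma restrictT_combineT_right {V W : Set α} {q r : α → Option D} (hVW : Disjoint V W)
    (hq : IsOver V q) (hr : IsOver W r) : restrictT W (combineT q r) = r := by
  funext a
  by_cases ha : a ∈ W
  · simp [restrictT, combineT, ha, hq.eq_none (Set.disjoint_right.mp hVW ha)]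
  · simp [restrictT, ha, hr.eq_none ha]

lemma combineT_restrictT_sdiff {U V : Set α} {t : α → Option D} (h : IsOver U t)
    (hVU : V ⊆ U) : combineT (restrictT V t) (restrictT (U \ V) t) = t := by
  funext a
  by_cases ha : a ∈ V
  · obtain ⟨v, hv⟩ := Option.isSome_iff_exists.mp ((h a).mpr (hVU ha))
    simp [restrictT, combineT, ha, hv]
  · by_cases haU : a ∈ U
    · simp [restrictT, combineT, ha, haU]
    · simp [restrictT, combineT, ha, haU, h.eq_none haU]

end Tuples

section Relations

variable {α D : Type*}

lemma IsRelOver.projRel {U W : Set α} {R : Set (α → Option D)} (hR : IsRelOver U R)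
    (hWU : W ⊆ U) : IsRelOver W (projRel W R) :=
  ⟨hR.1.image _, by rintro _ ⟨t, ht, rfl⟩; exact (hR.2 t ht).restrictT hWU⟩

lemma projRel_prodRel_left {V : Set α} {Q S : Set (α → Option D)} (hQ : ∀ q ∈ Q, IsOver V q)
    (hS : S.Nonempty) : projRel V (prodRel Q S) = Q := by
  apply Set.Subset.antisymm
  · rintro _ ⟨_, ⟨q, hq, r, -, rfl⟩, rfl⟩
    rwa [restrictT_combineT_left (hQ q hq)]
  · intro q hq
    obtain ⟨r, hr⟩ := hS
    exact ⟨combineT q r, Set.mem_image2_of_mem hq hr, restrictT_combineT_left (hQ q hq)⟩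

lemma projRel_prodRel_right {V W : Set α} {Q S : Set (α → Option D)} (hVW : Disjoint V W)
    (hQ : ∀ q ∈ Q, IsOver V q) (hS : ∀ r ∈ S, IsOver W r) (hQne : Q.Nonempty) :
    projRel W (prodRel Q S) = S := by
  apply Set.Subset.antisymm
  · rintro _ ⟨_, ⟨q, hq, r, hr, rfl⟩, rfl⟩
    rwa [restrictT_combineT_right hVW (hQ q hq) (hS r hr)]
  · intro r hr
    obtain ⟨q, hq⟩ := hQne
    exact ⟨combineT q r, Set.mem_image2_of_mem hq hr,
      restrictT_combineT_right hVW (hQ q hq) (hS r hr)⟩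

lemma ncard_prodRel {V W : Set α} {Q S : Set (α → Option D)} (hVW : Disjoint V W)
    (hQ : ∀ q ∈ Q, IsOver V q) (hS : ∀ r ∈ S, IsOver W r) :
    (prodRel Q S).ncard = Q.ncard * S.ncard := by
  have hinj : Set.InjOn (fun p : (α → Option D) × (α → Option D) => combineT p.1 p.2)
      (Q ×ˢ S) := by
    rintro ⟨q, r⟩ ⟨hq, hr⟩ ⟨q', r'⟩ ⟨hq', hr'⟩ (h : combineT q r = combineT q' r')
    have hleft : q = q' := by
      rw [← restrictT_combineT_left (r := r) (hQ q hq), h,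
        restrictT_combineT_left (hQ q' hq')]
    have hright : r = r' := by
      rw [← restrictT_combineT_right hVW (hQ q hq) (hS r hr), h,
        restrictT_combineT_right hVW (hQ q' hq') (hS r' hr')]
    rw [hleft, hright]
  rw [prodRel, ← Set.image_prod, hinj.ncard_image, Set.ncard_prod]

lemma subset_prodRel_projRel {U V : Set α} {R : Set (α → Option D)} (hR : ∀ t ∈ R, IsOver U t)
    (hVU : V ⊆ U) : R ⊆ prodRel (projRel V R) (projRel (U \ V) R) := fun t ht =>
  combineT_restrictT_sdiff (hR t ht) hVU ▸
    Set.mem_image2_of_mem (Set.mem_image_of_mem _ ht) (Set.mem_image_of_mem _ ht)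

end Relations

theorem stmt_8_general {α D : Type*} (U V : Set α)
    (hVU : V ⊆ U) (hVne : V.Nonempty)
    (R P : Set (α → Option D)) (hR : IsRelOver U R) (hRne : R.Nonempty)
    (hP : IsRelOver V P) :
    IsFactor U R V P ↔
      (projRel V R = P ∧ P.ncard * (projRel (U \ V) R).ncard = R.ncard) := by
  have hdisj : Disjoint V (U \ V) := Set.disjoint_sdiff_right
  constructor
  · rintro ⟨-, -, -, R', hR', rfl⟩
    refine ⟨projRel_prodRel_left hP.2 hRne.of_image2_right, ?_⟩
    rw [projRel_prodRel_right hdisj hP.2 hR'.2 hRne.of_image2_left,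
      ncard_prodRel hdisj hP.2 hR'.2]
  · rintro ⟨rfl, hcard⟩
    have hR' := hR.projRel (W := U \ V) Set.sdiff_subset
    refine ⟨hVne, hVU, hP, _, hR', ?_⟩
    refine Set.eq_of_subset_of_ncard_le (subset_prodRel_projRel hR.2 hVU) ?_ (hP.1.image2 _ hR'.1)
    rw [ncard_prodRel hdisj hP.2 hR'.2, hcard]

theorem stmt_8 {α D : Type*} (U V : Set α) (hUfin : U.Finite)
    (hVU : V ⊆ U) (hVne : V.Nonempty) (hVproper : V ≠ U)
    (R P : Set (α → Option D)) (hR : IsRelOver U R) (hRne : R.Nonempty)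
    (hP : IsRelOver V P) :
    IsFactor U R V P ↔
      (projRel V R = P ∧ P.ncard * (projRel (U \ V) R).ncard = R.ncard) :=
  stmt_8_general U V hVU hVne R P hR hRne hP
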